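/- arXiv:1806.02108 — 3 statements merged into one kernel-verified Lean document; each statement's English description precedes it below -/
import Mathlib

section
/- Let C be a k-linear Hom-finite triangulated category with split idempotents, t an n-cluster tilting object, T = add(t), F = Hom_C(t,−). For m ∈ T * ΣT and c ∈ C, the map Hom_C(m,c) → Hom_Γ(Fm, Fc) given by μ ↦ Fμ (where Γ = End_C(t)) is surjective, and its kernel consists exactly of the morphisms m → c that factor through an object of ΣT. -/
open CategoryTheory Category Limits Pretriangulated Opposite

universe v u

section Defs

variable {C : Type u} [Category.{v} C]

section Add

variable [Preadditive C] [HasFiniteBiproducts C]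

/-- `x` lies in `add t`: it is a direct summand of a finite direct sum of copies of `t`. -/
def inAdd (t x : C) : Prop :=
  ∃ (n : ℕ) (i : x ⟶ ⨁ (fun _ : Fin n => t)) (r : ⨁ (fun _ : Fin n => t) ⟶ x),
    i ≫ r = 𝟙 x

end Add

/-- A morphism lies in the radical of the category. -/
def radMor [Preadditive C] {x y : C} (f : x ⟶ y) : Prop :=
  ∀ g : y ⟶ x, IsIso (𝟙 x - f ≫ g)

/-- An object is indecomposable. -/
def IndecObj [Preadditive C] [HasBinaryBiproducts C] (s : C) : Prop :=
  ¬ IsZero s ∧ ∀ (a b : C), (s ≅ a ⊞ b) → IsZero a ∨ IsZero b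

/-- Every object has a precover by an object of `Tset` (contravariant finiteness). -/
def IsPrecovering (Tset : Set C) : Prop :=
  ∀ c : C, ∃ (x : C) (f : x ⟶ c), x ∈ Tset ∧
    ∀ x' ∈ Tset, ∀ g : x' ⟶ c, ∃ h : x' ⟶ x, h ≫ f = g

/-- Every object has a preenvelope by an object of `Tset` (covariant finiteness). -/
def IsPreenveloping (Tset : Set C) : Prop :=
  ∀ c : C, ∃ (x : C) (f : c ⟶ x), x ∈ Tset ∧
    ∀ x' ∈ Tset, ∀ g : c ⟶ x', ∃ h : x ⟶ x', f ≫ h = g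

/-- `f : x ⟶ c` is a `Tset`-cover: a right minimal `Tset`-approximation. -/
def IsTCover (Tset : Set C) {x c : C} (f : x ⟶ c) : Prop :=
  x ∈ Tset ∧ (∀ x' ∈ Tset, ∀ g : x' ⟶ c, ∃ h : x' ⟶ x, h ≫ f = g) ∧
    ∀ φ : x ⟶ x, φ ≫ f = f → IsIso φ

section Shift

variable [Preadditive C] [HasShift C ℤ]

/-- `Tset` is an `n`-cluster tilting subcategory: it is functorially finite and coincides with
both `Ext^{1..n-1}`-orthogonals of itself. -/
structure IsClusterTiltingSub (n : ℕ) (Tset : Set C) : Prop where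
  precovering : IsPrecovering Tset
  preenveloping : IsPreenveloping Tset
  mem_iff_ext₁ : ∀ c : C, c ∈ Tset ↔
    ∀ i : ℕ, 1 ≤ i → i ≤ n - 1 → ∀ x ∈ Tset, ∀ f : x ⟶ c⟦(i : ℤ)⟧, f = 0
  mem_iff_ext₂ : ∀ c : C, c ∈ Tset ↔
    ∀ i : ℕ, 1 ≤ i → i ≤ n - 1 → ∀ x ∈ Tset, ∀ f : c ⟶ x⟦(i : ℤ)⟧, f = 0

/-- `t` is an `n`-cluster tilting object: `add t` is an `n`-cluster tilting subcategory. -/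
def IsClusterTiltingObj [HasFiniteBiproducts C] (n : ℕ) (t : C) : Prop :=
  IsClusterTiltingSub n {x : C | inAdd t x}

end Shift

section Tri

variable [Preadditive C] [HasZeroObject C] [HasShift C ℤ]
  [∀ n : ℤ, (shiftFunctor C n).Additive] [Pretriangulated C]

/-- The Iyama–Yoshino star operation `X * Y` on full subcategories. -/
def star (X Y : Set C) : Set C :=
  {c | ∃ (x y : C) (f : x ⟶ c) (g : c ⟶ y) (h : y ⟶ x⟦(1 : ℤ)⟧),
    Triangle.mk f g h ∈ (distTriang C) ∧ x ∈ X ∧ y ∈ Y}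

/-- Iterated star operation `X₁ * X₂ * ⋯ * Xₘ`. -/
def starList : List (Set C) → Set C
  | [] => {c | IsZero c}
  | [X] => X
  | X :: Y :: L => star X (starList (Y :: L))

/-- A tower of triangles connecting the objects `cobj (m+1), cobj m, …, cobj 1, cobj 0`:
triangles `w (i+1) ⟶ cobj (i+1) ⟶ w i ⟶ (w (i+1))⟦1⟧` for `i < m`, with
`w 0 = cobj 0` and `w m = cobj (m+1)`. -/
structure TriTower (m : ℕ) (cobj : ℕ → C) where
  w : ℕ → C
  fmor : ∀ i : ℕ, w (i + 1) ⟶ cobj (i + 1)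
  gmor : ∀ i : ℕ, cobj (i + 1) ⟶ w i
  hmor : ∀ i : ℕ, w i ⟶ (w (i + 1))⟦(1 : ℤ)⟧
  mem : ∀ i < m, Triangle.mk (fmor i) (gmor i) (hmor i) ∈ distTriang C
  w_zero : w 0 = cobj 0
  w_top : w m = cobj (m + 1)

/-- The composite `w 0 ⟶ Σʲ (w j)` of the (suitably shifted) wavy morphisms of a tower. -/
noncomputable def towerComp {m : ℕ} {cobj : ℕ → C} (tw : TriTower m cobj) :
    ∀ j : ℕ, (tw.w 0 ⟶ (tw.w j)⟦(j : ℤ)⟧)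
  | 0 => (shiftFunctorZero' C ((0 : ℕ) : ℤ) (by simp)).inv.app (tw.w 0)
  | (j + 1) => towerComp tw j ≫ (shiftFunctor C (j : ℤ)).map (tw.hmor j) ≫
      (shiftFunctorAdd' C (1 : ℤ) (j : ℤ) ((j + 1 : ℕ) : ℤ) (by push_cast; ring)).inv.app
        (tw.w (j + 1))

/-- The full composite `cobj 0 ⟶ Σᵐ (cobj (m+1))` of the wavy morphisms of a tower. -/
noncomputable def towerGamma {m : ℕ} {cobj : ℕ → C} (tw : TriTower m cobj) :
    cobj 0 ⟶ (cobj (m + 1))⟦(m : ℤ)⟧ :=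
  eqToHom tw.w_zero.symm ≫ towerComp tw m ≫ eqToHom (by rw [tw.w_top])

/-- `cls` is constant on isomorphism classes of objects of `Tset` and additive on biproducts
of objects of `Tset`; quantifying over all such `cls` encodes identities in the split
Grothendieck group `K₀^{sp}(Tset)`. -/
def IsAddOn [HasFiniteBiproducts C] (Tset : Set C) {G : Type*} [AddCommGroup G]
    (cls : C → G) : Prop :=
  (∀ x y : C, x ∈ Tset → y ∈ Tset → Nonempty (x ≅ y) → cls x = cls y) ∧
  (∀ x y : C, x ∈ Tset → y ∈ Tset → cls (x ⊞ y) = cls x + cls y)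

/-- `ind` is the triangulated index with respect to `Tset`: for each `c` there is a tower of
triangles built from `Tset`-covers, and `ind c` is the alternating sum of the classes of its
`Tset`-objects. -/
def IsIndex [HasFiniteBiproducts C] (n : ℕ) (Tset : Set C) {G : Type*} [AddCommGroup G]
    (cls ind : C → G) : Prop :=
  ∀ c : C, ∃ (cobj : ℕ → C) (tw : TriTower (n - 1) cobj),
    cobj 0 = c ∧ (∀ i < n - 1, IsTCover Tset (tw.gmor i)) ∧ cobj n ∈ Tset ∧
    ind c = ∑ i ∈ Finset.range n, ((-1 : ℤ) ^ i) • cls (cobj (i + 1))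

/-- `ind` is the `(d+2)`-angulated index with respect to `Tset`: for each `s ∈ Sset` there is a
`(d+2)`-angle (encoded as a tower of triangles) `t_d → ⋯ → t_0 → s → Σ^d t_d` with `t_i ∈ Tset`
and radical maps, and `ind s` is the alternating sum of the classes of the `t_i`. -/
def IsHigherIndex [HasFiniteBiproducts C] (d : ℕ) (Tset Sset : Set C) {G : Type*}
    [AddCommGroup G] (cls ind : C → G) : Prop :=
  ∀ s ∈ Sset, ∃ (cobj : ℕ → C) (tw : TriTower d cobj),
    cobj 0 = s ∧ (∀ i, 1 ≤ i → i ≤ d + 1 → cobj i ∈ Tset) ∧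
    (∀ j : ℕ, j + 2 ≤ d → radMor (tw.gmor (j + 1) ≫ tw.fmor j)) ∧
    (∀ j : ℕ, (hj : j + 1 = d) →
      radMor ((eqToHom (show cobj (d + 1) = tw.w (j + 1) by rw [hj, tw.w_top]) :
        cobj (d + 1) ⟶ tw.w (j + 1)) ≫ tw.fmor j)) ∧
    ind s = ∑ i ∈ Finset.range (d + 1), ((-1 : ℤ) ^ i) • cls (cobj (i + 1))

/-- `t` is an Oppermann–Thomas cluster tilting object of the `(d+2)`-angulated category `Sset`:
`Hom(t, Σ^d t) = 0`, and every `s ∈ Sset` admits a `(d+2)`-angle (encoded as a tower)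
`t_d → ⋯ → t_0 → s → Σ^d t_d` with all `t_i ∈ add t`. -/
def IsOTClusterTilting [HasFiniteBiproducts C] (d : ℕ) (Sset : Set C) (t : C) : Prop :=
  t ∈ Sset ∧ (∀ f : t ⟶ t⟦(d : ℤ)⟧, f = 0) ∧
    ∀ s ∈ Sset, ∃ (cobj : ℕ → C) (tw : TriTower d cobj),
      cobj 0 = s ∧ ∀ i, 1 ≤ i → i ≤ d + 1 → inAdd t (cobj i)

/-- A `N`-Calabi–Yau structure on `Sset`: a bifunctorial perfect pairing
`Hom(x,y) × Hom(y, x⟦N⟧) → k`, encoding natural isomorphisms `Hom(x,y) ≅ D Hom(y, x⟦N⟧)`. -/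
structure CYData (k : Type*) [Field k] [Linear k C] (Sset : Set C) (N : ℤ) where
  pair : ∀ x y : C, (x ⟶ y) → (y ⟶ x⟦N⟧) → k
  add_left : ∀ x y, x ∈ Sset → y ∈ Sset → ∀ (f f' : x ⟶ y) (g : y ⟶ x⟦N⟧),
    pair x y (f + f') g = pair x y f g + pair x y f' g
  add_right : ∀ x y, x ∈ Sset → y ∈ Sset → ∀ (f : x ⟶ y) (g g' : y ⟶ x⟦N⟧),
    pair x y f (g + g') = pair x y f g + pair x y f g'
  smul_left : ∀ x y, x ∈ Sset → y ∈ Sset → ∀ (a : k) (f : x ⟶ y) (g : y ⟶ x⟦N⟧),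
    pair x y (a • f) g = a * pair x y f g
  smul_right : ∀ x y, x ∈ Sset → y ∈ Sset → ∀ (a : k) (f : x ⟶ y) (g : y ⟶ x⟦N⟧),
    pair x y f (a • g) = a * pair x y f g
  assoc : ∀ x y z, x ∈ Sset → y ∈ Sset → z ∈ Sset →
    ∀ (f : x ⟶ y) (g : y ⟶ z) (h : z ⟶ x⟦N⟧),
    pair x z (f ≫ g) h = pair x y f (g ≫ h)
  nondeg_left : ∀ x y, x ∈ Sset → y ∈ Sset → ∀ f : x ⟶ y,
    (∀ g : y ⟶ x⟦N⟧, pair x y f g = 0) → f = 0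
  nondeg_right : ∀ x y, x ∈ Sset → y ∈ Sset → ∀ g : y ⟶ x⟦N⟧,
    (∀ f : x ⟶ y, pair x y f g = 0) → g = 0

end Tri

end Defs

/-! Let `x ⟶ m ⟶ y ⟶ x⟦1⟧` be the triangle with `x ∈ add t`, `y ∈ add Σt`. Since
`Hom(t, Σt) = 0`, every `t ⟶ m` factors through `x`; and on `add t` every `Γ`-linear map of
`t`-points is induced by a morphism (Yoneda on `add t`). So `φ` composed with `x ⟶ m` is induced
by some `ν : x ⟶ c`. As `y⟦-1⟧ ⟶ x ⟶ m` is zero and `y⟦-1⟧ ∈ add t`, `ν` kills `y⟦-1⟧ ⟶ x`,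
hence extends along `x ⟶ m`. Dually, `Fμ = 0` forces `μ` to vanish on `x`, so `μ` factors
through `m ⟶ y`, and `y` is a summand of `(⨁ t)⟦1⟧`. -/

section AddCategory

variable {C : Type u} [Category.{v} C] [Preadditive C] [HasFiniteBiproducts C]

lemma inAdd_self (t : C) : inAdd t t :=
  ⟨1, biproduct.lift fun _ => 𝟙 t, biproduct.π _ 0, by simp⟩

lemma inAdd_biproduct (t : C) (N : ℕ) : inAdd t (⨁ fun _ : Fin N => t) :=
  ⟨N, 𝟙 _, 𝟙 _, Category.id_comp _⟩

namespace inAdd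

lemma of_iso {t t' x : C} (e : t ≅ t') (h : inAdd t x) : inAdd t' x := by
  obtain ⟨N, i, r, hir⟩ := h
  let E : (⨁ fun _ : Fin N => t) ≅ ⨁ fun _ : Fin N => t' := biproduct.mapIso fun _ => e
  exact ⟨N, i ≫ E.hom, E.inv ≫ r, by simp [hir]⟩

lemma map {D : Type*} [Category D] [Preadditive D] [HasFiniteBiproducts D]
    (F : C ⥤ D) [F.Additive] {t x : C} (h : inAdd t x) : inAdd (F.obj t) (F.obj x) := by
  obtain ⟨N, i, r, hir⟩ := h
  let E := F.mapBiproduct fun _ : Fin N => t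
  exact ⟨N, F.map i ≫ E.hom, E.inv ≫ F.map r, by simp [← F.map_comp, hir]⟩

lemma exists_retract_map {D : Type*} [Category D] [Preadditive D] [HasFiniteBiproducts D]
    (F : C ⥤ D) [F.Additive] {t : C} {y : D} (h : inAdd (F.obj t) y) :
    ∃ (t₁ : C) (i : y ⟶ F.obj t₁) (r : F.obj t₁ ⟶ y), inAdd t t₁ ∧ i ≫ r = 𝟙 y := by
  obtain ⟨N, i, r, hir⟩ := h
  let E := F.mapBiproduct fun _ : Fin N => t
  exact ⟨_, i ≫ E.inv, E.hom ≫ r, inAdd_biproduct t N, by simp [hir]⟩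

lemma eq_zero_of_forall_comp_eq_zero {t x z : C} (hx : inAdd t x) (f : x ⟶ z)
    (h : ∀ g : t ⟶ x, g ≫ f = 0) : f = 0 := by
  obtain ⟨N, i, r, hir⟩ := hx
  have hr : r ≫ f = 0 := biproduct.hom_ext' _ _ fun j => by
    simpa using h (biproduct.ι (fun _ : Fin N => t) j ≫ r)
  rw [← Category.id_comp f, ← hir, Category.assoc, hr, comp_zero]

lemma eq_zero_of_forall_comp_eq_zero' {t x y : C} (hy : inAdd t y) (f : x ⟶ y)
    (h : ∀ g : y ⟶ t, f ≫ g = 0) : f = 0 := by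
  obtain ⟨N, i, r, hir⟩ := hy
  have hi : f ≫ i = 0 := biproduct.hom_ext _ _ fun j => by
    simpa using h (i ≫ biproduct.π (fun _ : Fin N => t) j)
  rw [← Category.comp_id f, ← hir, ← Category.assoc, hi, zero_comp]

lemma exists_hom_of_linear {t x c : C} (hx : inAdd t x) (ψ : (t ⟶ x) →+ (t ⟶ c))
    (hψ : ∀ (e : t ⟶ t) (g : t ⟶ x), ψ (e ≫ g) = e ≫ ψ g) :
    ∃ ν : x ⟶ c, ∀ g : t ⟶ x, ψ g = g ≫ ν := by
  obtain ⟨N, i, r, hir⟩ := hx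
  let ι := biproduct.ι fun _ : Fin N => t
  let π := biproduct.π fun _ : Fin N => t
  refine ⟨i ≫ ∑ j, π j ≫ ψ (ι j ≫ r), fun g => ?_⟩
  have hg : g = ∑ j, (g ≫ i ≫ π j) ≫ ι j ≫ r := by
    conv_lhs => rw [← Category.comp_id g, ← hir, ← Category.id_comp r, ← biproduct.total]
    simp only [Preadditive.sum_comp, Preadditive.comp_sum, Category.assoc]
    rfl
  conv_lhs => rw [hg]
  rw [map_sum, Finset.sum_congr rfl fun j _ => hψ _ _]
  simp only [Preadditive.comp_sum, Category.assoc]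

end inAdd

end AddCategory

namespace IsClusterTiltingObj

section

variable {C : Type u} [Category.{v} C] [Preadditive C] [HasShift C ℤ] [HasFiniteBiproducts C]
  {n : ℕ} {t : C}

lemma shift_one_eq_zero (hn : 2 ≤ n) (ht : IsClusterTiltingObj n t) {a b : C}
    (ha : inAdd t a) (hb : inAdd t b) (f : a ⟶ b⟦(1 : ℤ)⟧) : f = 0 :=
  (ht.mem_iff_ext₁ b).mp hb 1 le_rfl (by omega) a ha f

lemma eq_zero_of_inAdd_shift (hn : 2 ≤ n) (ht : IsClusterTiltingObj n t) {a y : C}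
    (ha : inAdd t a) (hy : inAdd (t⟦(1 : ℤ)⟧) y) (f : a ⟶ y) : f = 0 :=
  hy.eq_zero_of_forall_comp_eq_zero' f fun g =>
    shift_one_eq_zero hn ht ha (inAdd_self t) (f ≫ g)

end

variable {C : Type u} [Category.{v} C] [Preadditive C] [HasZeroObject C] [HasShift C ℤ]
  [∀ n : ℤ, (shiftFunctor C n).Additive] [Pretriangulated C] [HasFiniteBiproducts C]
  {n : ℕ} {t x m y c : C} {f : x ⟶ m} {g : m ⟶ y} {h : y ⟶ x⟦(1 : ℤ)⟧}

lemma exists_hom_of_linear_of_distTriang (hn : 2 ≤ n) (ht : IsClusterTiltingObj n t)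
    (hT : Triangle.mk f g h ∈ distTriang C) (hx : inAdd t x) (hy : inAdd (t⟦(1 : ℤ)⟧) y)
    (φ : (t ⟶ m) →+ (t ⟶ c)) (hφ : ∀ (e : t ⟶ t) (g : t ⟶ m), φ (e ≫ g) = e ≫ φ g) :
    ∃ μ : m ⟶ c, ∀ g : t ⟶ m, φ g = g ≫ μ := by
  obtain ⟨ν, hν⟩ : ∃ ν : x ⟶ c, ∀ b : t ⟶ x, φ (b ≫ f) = b ≫ ν :=
    hx.exists_hom_of_linear (φ.comp (Preadditive.rightComp t f)) fun e g => by
      show φ ((e ≫ g) ≫ f) = e ≫ φ (g ≫ f)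
      rw [Category.assoc, hφ]
  have hy' : inAdd t (y⟦(-1 : ℤ)⟧) :=
    (hy.map (shiftFunctor C (-1 : ℤ))).of_iso ((shiftEquiv C (1 : ℤ)).unitIso.symm.app t)
  have hT' := inv_rot_of_distTriang _ hT
  obtain ⟨s, hsf, hs⟩ : ∃ s : y⟦(-1 : ℤ)⟧ ⟶ x, s ≫ f = 0 ∧
      ∀ ν : x ⟶ c, s ≫ ν = 0 → ∃ μ : m ⟶ c, ν = f ≫ μ :=
    ⟨_, comp_distTriang_mor_zero₁₂ _ hT', fun ν => Triangle.yoneda_exact₂ _ hT' ν⟩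
  obtain ⟨μ, rfl⟩ := hs ν <| hy'.eq_zero_of_forall_comp_eq_zero _ fun a => by
    rw [← Category.assoc, ← hν, Category.assoc, hsf, comp_zero, map_zero]
  refine ⟨μ, fun a => ?_⟩
  obtain ⟨b, rfl⟩ : ∃ b : t ⟶ x, a = b ≫ f :=
    Triangle.coyoneda_exact₂ _ hT a (eq_zero_of_inAdd_shift hn ht (inAdd_self t) hy _)
  rw [hν, Category.assoc]

lemma forall_comp_eq_zero_iff_of_distTriang (hn : 2 ≤ n) (ht : IsClusterTiltingObj n t)
    (hT : Triangle.mk f g h ∈ distTriang C) (hx : inAdd t x) (hy : inAdd (t⟦(1 : ℤ)⟧) y)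
    (μ : m ⟶ c) :
    (∀ a : t ⟶ m, a ≫ μ = 0) ↔
      ∃ (t₁ : C) (u : m ⟶ t₁⟦(1 : ℤ)⟧) (w : t₁⟦(1 : ℤ)⟧ ⟶ c), inAdd t t₁ ∧ u ≫ w = μ := by
  constructor
  · intro hμ
    have hfμ : f ≫ μ = 0 :=
      hx.eq_zero_of_forall_comp_eq_zero _ fun a => by simpa using hμ (a ≫ f)
    obtain ⟨w, rfl⟩ : ∃ w : y ⟶ c, μ = g ≫ w := Triangle.yoneda_exact₂ _ hT μ hfμ
    obtain ⟨t₁, i, r, ht₁, hir⟩ := hy.exists_retract_map (shiftFunctor C (1 : ℤ))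
    exact ⟨t₁, g ≫ i, r ≫ w, ht₁, by rw [Category.assoc, reassoc_of% hir]⟩
  · rintro ⟨t₁, u, w, ht₁, rfl⟩ a
    rw [← Category.assoc, shift_one_eq_zero hn ht (inAdd_self t) ht₁ (a ≫ u), zero_comp]

end IsClusterTiltingObj

variable {C : Type u} [Category.{v} C]

theorem stmt2 (k : Type*) [Field k] [Preadditive C] [CategoryTheory.Linear k C] [HasZeroObject C]
    [HasShift C ℤ] [∀ n : ℤ, (shiftFunctor C n).Additive] [Pretriangulated C]
    [HasFiniteBiproducts C] [IsIdempotentComplete C]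
    [∀ X Y : C, FiniteDimensional k (X ⟶ Y)]
    (n : ℕ) (hn : 2 ≤ n) (t : C) (ht : IsClusterTiltingObj n t)
    (m c : C) (hm : m ∈ star {x : C | inAdd t x} {x : C | inAdd (t⟦(1 : ℤ)⟧) x}) :
    (∀ φ : (t ⟶ m) → (t ⟶ c),
        (∀ g g' : t ⟶ m, φ (g + g') = φ g + φ g') →
        (∀ (e : t ⟶ t) (g : t ⟶ m), φ (e ≫ g) = e ≫ φ g) →
        ∃ μ : m ⟶ c, ∀ g : t ⟶ m, φ g = g ≫ μ) ∧
      (∀ μ : m ⟶ c,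
        (∀ g : t ⟶ m, g ≫ μ = 0) ↔
          ∃ (t₁ : C) (u : m ⟶ t₁⟦(1 : ℤ)⟧) (w : t₁⟦(1 : ℤ)⟧ ⟶ c),
            inAdd t t₁ ∧ u ≫ w = μ) := by
  obtain ⟨x, y, f, g, h, hT, hx, hy⟩ := hm
  exact ⟨fun φ hadd hφ => ht.exists_hom_of_linear_of_distTriang hn hT hx hy
      (AddMonoidHom.mk' φ hadd) hφ,
    ht.forall_comp_eq_zero_iff_of_distTriang hn hT hx hy⟩
end

section
/- Let C be a k-linear Hom-finite triangulated category with split idempotents and t an n-cluster tilting object with T = add(t). For every c ∈ C there is a tower of triangles with objects t_{n-1}, ..., t_0 ∈ T, where each morphism t_i → (successive cone) is a T-cover, and the objects t_i are determined up to isomorphism by c. Consequently the triangulated index index_T(c) = Σ_{i=0}^{n-1} (−1)^i [t_i] ∈ K_0^{sp}(T) is well defined. -/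
open CategoryTheory Category Limits Pretriangulated Opposite

universe v u

variable {C : Type u} [Category.{v} C]

/-!
A precover `f : x ⟶ c` whose endomorphism algebra has minimal dimension is right minimal: if
`φ ≫ f = f` with `φ` not invertible, the Fitting idempotent of `φ` is a proper idempotent `e` with
`e ≫ f = f`, and splitting it off gives a precover by a proper summand of `x`. Iterating covers and
their cocones builds the tower. The long exact `Hom(T, -)` sequences of its triangles give
`Hom(T, Σⁱ w_j) = 0` for `1 ≤ i ≤ j`, so `w_{n-1}` lies in `T` by cluster tilting. For uniqueness,
covers of isomorphic objects are isomorphic, and an isomorphism between the covers extends to an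
isomorphism of the triangles, hence of the next objects of the towers.
-/

theorem IsArtinianRing.exists_isIdempotentElem_dvd_and_one_sub_dvd {R : Type*} [CommRing R]
    [IsArtinianRing R] (a : R) : ∃ e : R, IsIdempotentElem e ∧ a ∣ e ∧ (1 - a) ∣ (1 - e) := by
  obtain ⟨n, y, hy⟩ := IsArtinian.exists_pow_succ_smul_dvd a (1 : R)
  rw [smul_eq_mul, smul_eq_mul, mul_one, Nat.succ_eq_add_one] at hy
  have hstable : ∀ j, a ^ (n + 1 + j) * y ^ j = a ^ (n + 1) := by
    intro j
    induction j with
    | zero => simp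
    | succ j ih => rw [← ih]; linear_combination a ^ (j + 1) * y ^ j * hy
  refine ⟨a ^ (n + 1) * y ^ (n + 1), ?_, Dvd.dvd.mul_right (dvd_pow_self a n.succ_ne_zero) _, ?_⟩
  · unfold IsIdempotentElem
    linear_combination y ^ (n + 1) * hstable (n + 1)
  · set π := Ideal.Quotient.mk (Ideal.span {1 - a})
    have ha : π a = 1 := by
      rw [eq_comm, ← sub_eq_zero, ← map_one π, ← map_sub, Ideal.Quotient.eq_zero_iff_dvd]
    have hy1 : π y = 1 := by simpa [ha] using congrArg π hy
    rw [← Ideal.Quotient.eq_zero_iff_dvd, map_sub, map_one, map_mul, map_pow, map_pow, ha, hy1]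
    simp

section Linear

variable [Preadditive C] (k : Type*) [Field k] [Linear k C]

open scoped IsMulCommutative in
theorem exists_idempotent_comp_eq_of_comp_eq {x : C} [FiniteDimensional k (x ⟶ x)]
    (φ : x ⟶ x) : ∃ e : x ⟶ x, e ≫ e = e ∧ (e = 𝟙 x → IsIso φ) ∧
      ∀ {c : C} (f : x ⟶ c), φ ≫ f = f → e ≫ f = f := by
  let A := Algebra.adjoin k {(show End x from φ)}
  have : FiniteDimensional k (End x) := ‹FiniteDimensional k (x ⟶ x)›
  have : IsArtinianRing A := IsArtinianRing.of_finite k A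
  let a : A := ⟨φ, Algebra.self_mem_adjoin_singleton k _⟩
  obtain ⟨e, he, ⟨u, hu⟩, ⟨v, hv⟩⟩ :=
    IsArtinianRing.exists_isIdempotentElem_dvd_and_one_sub_dvd a
  let ε : x ⟶ x := e.1
  have hu' : ε = u.1 ≫ φ := congrArg Subtype.val hu
  have hv' : 𝟙 x - ε = v.1 ≫ (𝟙 x - φ) := congrArg Subtype.val hv
  have hcomm : φ ≫ u.1 = u.1 ≫ φ := congrArg Subtype.val (mul_comm u a)
  refine ⟨ε, congrArg Subtype.val he, fun h1 => ⟨u.1, ?_, ?_⟩, fun f hf => ?_⟩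
  · rw [hcomm, ← hu', h1]
  · rw [← hu', h1]
  · have : (𝟙 x - ε) ≫ f = 0 := by simp [hv', hf]
    rwa [Preadditive.sub_comp, id_comp, sub_eq_zero, eq_comm] at this

theorem finrank_end_lt_of_retract {x y : C} [FiniteDimensional k (x ⟶ x)]
    (i : y ⟶ x) (r : x ⟶ y) (hir : i ≫ r = 𝟙 y) (hri : r ≫ i ≠ 𝟙 x) :
    Module.finrank k (y ⟶ y) < Module.finrank k (x ⟶ x) := by
  let L := (Linear.leftComp k x r).comp (Linear.rightComp k y i)
  have hL : ∀ ψ, L ψ = r ≫ ψ ≫ i := fun _ => rfl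
  have hinj : Function.Injective L := fun ψ ψ' h => by
    simpa [hL, reassoc_of% hir, hir] using i ≫= h =≫ r
  have hne : LinearMap.range L ≠ ⊤ := fun htop => by
    obtain ⟨ψ, hψ⟩ := LinearMap.range_eq_top.1 htop (𝟙 x)
    rw [hL] at hψ
    refine hri (calc r ≫ i = r ≫ i ≫ r ≫ ψ ≫ i := by rw [hψ, comp_id]
      _ = 𝟙 x := by rw [reassoc_of% hir, hψ])
  rw [← LinearMap.finrank_range_of_inj hinj]
  exact Submodule.finrank_lt hne

theorem exists_isTCover [∀ X Y : C, FiniteDimensional k (X ⟶ Y)] [IsIdempotentComplete C]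
    {Tset : Set C}
    (hretract : ∀ {x y : C} (i : y ⟶ x) (r : x ⟶ y), i ≫ r = 𝟙 y → x ∈ Tset → y ∈ Tset)
    (hpre : IsPrecovering Tset) (c : C) : ∃ (x : C) (f : x ⟶ c), IsTCover Tset f := by
  suffices ∀ d (x : C) (f : x ⟶ c), x ∈ Tset →
      (∀ x' ∈ Tset, ∀ g : x' ⟶ c, ∃ h : x' ⟶ x, h ≫ f = g) →
      Module.finrank k (x ⟶ x) = d → ∃ (x : C) (f : x ⟶ c), IsTCover Tset f by
    obtain ⟨x, f, hx, hf⟩ := hpre c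
    exact this _ x f hx hf rfl
  intro d
  induction d using Nat.strong_induction_on with
  | _ d ih =>
    intro x f hx hf hd
    by_cases hmin : ∀ φ : x ⟶ x, φ ≫ f = f → IsIso φ
    · exact ⟨x, f, hx, hf, hmin⟩
    push Not at hmin
    obtain ⟨φ, hφ, hnot⟩ := hmin
    obtain ⟨e, hee, hiso, habs⟩ := exists_idempotent_comp_eq_of_comp_eq k φ
    obtain ⟨y, i, r, hir, hri⟩ := IsIdempotentComplete.idempotents_split x e hee
    have hlt := finrank_end_lt_of_retract k i r hir (hri ▸ fun h => hnot (hiso h))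
    refine ih _ (hd ▸ hlt) y (i ≫ f) (hretract i r hir hx) (fun x' hx' g => ?_) rfl
    obtain ⟨h, rfl⟩ := hf x' hx' g
    exact ⟨h ≫ r, by rw [assoc, reassoc_of% hri, habs f hφ]⟩

end Linear

theorem inAdd_of_retract [Preadditive C] [HasFiniteBiproducts C]
    {t x y : C} (i : y ⟶ x) (r : x ⟶ y) (hir : i ≫ r = 𝟙 y) (hx : inAdd t x) : inAdd t y := by
  obtain ⟨m, j, s, hjs⟩ := hx
  exact ⟨m, i ≫ j, s ≫ r, by simp [reassoc_of% hjs, hir]⟩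

theorem IsTCover.exists_iso {Tset : Set C} {x x' c c' : C}
    {f : x ⟶ c} {f' : x' ⟶ c'} (hf : IsTCover Tset f) (hf' : IsTCover Tset f') (e : c ≅ c') :
    ∃ α : x ≅ x', f ≫ e.hom = α.hom ≫ f' := by
  obtain ⟨u, hu⟩ := hf'.2.1 x hf.1 (f ≫ e.hom)
  obtain ⟨v, hv⟩ := hf.2.1 x' hf'.1 (f' ≫ e.inv)
  have : IsIso (u ≫ v) := hf.2.2 _ (by simp [hv, reassoc_of% hu])
  have : IsIso (v ≫ u) := hf'.2.2 _ (by simp [hu, reassoc_of% hv])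
  have : Mono u := mono_of_mono u v
  have : IsSplitEpi u := IsSplitEpi.mk' ⟨inv (v ≫ u) ≫ v, by simp⟩
  have : IsIso u := isIso_of_mono_of_isSplitEpi u
  exact ⟨asIso u, hu.symm⟩

section Triangulated

variable [Preadditive C] [HasZeroObject C] [HasShift C ℤ]
  [∀ n : ℤ, (shiftFunctor C n).Additive] [Pretriangulated C]

theorem CategoryTheory.Pretriangulated.hom_to_shift_obj₁_eq_zero {T : Triangle C}
    (hT : T ∈ distTriang C) {x : C} (n₀ n₁ : ℤ) (h : n₀ + 1 = n₁)
    (h₃ : ∀ v : x ⟶ T.obj₃⟦n₀⟧, ∃ w : x ⟶ T.obj₂⟦n₀⟧, v = w ≫ T.mor₂⟦n₀⟧')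
    (h₂ : ∀ u : x ⟶ T.obj₂⟦n₁⟧, u = 0) (u : x ⟶ T.obj₁⟦n₁⟧) : u = 0 := by
  let F := preadditiveCoyoneda.obj (op x)
  obtain ⟨v, rfl⟩ := (ShortComplex.ab_exact_iff _).1
    (F.homologySequence_exact₁ T hT n₀ n₁ h) u (h₂ _)
  obtain ⟨w, rfl⟩ := h₃ v
  exact congrArg (fun g => g.hom w) (F.comp_homologySequenceδ T hT n₀ n₁ h)

theorem distinguished_mk_eqToHom {a a' b c : C} (p : a' = a) (f : a ⟶ b) (g : b ⟶ c)
    (h : c ⟶ a⟦(1 : ℤ)⟧) (hT : Triangle.mk f g h ∈ distTriang C) :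
    Triangle.mk (eqToHom p ≫ f) g (h ≫ (eqToHom p.symm)⟦(1 : ℤ)⟧') ∈ distTriang C := by
  subst p
  simpa using hT

def TriTower.consObj (c t : C) (cobj : ℕ → C) : ℕ → C
  | 0 => c
  | 1 => t
  | i + 2 => cobj (i + 1)

def TriTower.cons {m : ℕ} {cobj : ℕ → C} (tw : TriTower m cobj) {c t : C} (f : cobj 0 ⟶ t)
    (g : t ⟶ c) (h : c ⟶ (cobj 0)⟦(1 : ℤ)⟧) (hT : Triangle.mk f g h ∈ distTriang C) :
    TriTower (m + 1) (TriTower.consObj c t cobj) where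
  w
    | 0 => c
    | i + 1 => tw.w i
  fmor
    | 0 => eqToHom tw.w_zero ≫ f
    | i + 1 => tw.fmor i
  gmor
    | 0 => g
    | i + 1 => tw.gmor i
  hmor
    | 0 => h ≫ (eqToHom tw.w_zero.symm)⟦(1 : ℤ)⟧'
    | i + 1 => tw.hmor i
  mem
    | 0, _ => distinguished_mk_eqToHom tw.w_zero f g h hT
    | i + 1, hi => tw.mem i (by omega)
  w_zero := rfl
  w_top := tw.w_top

def TriTower.single (c : C) : TriTower 0 (fun _ => c) where
  w _ := c
  fmor _ := 0
  gmor _ := 0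
  hmor _ := 0
  mem _ hi := absurd hi (Nat.not_lt_zero _)
  w_zero := rfl
  w_top := rfl

variable {Tset : Set C}

theorem exists_triTower_isTCover (hcov : ∀ c : C, ∃ (x : C) (f : x ⟶ c), IsTCover Tset f)
    (m : ℕ) (c : C) : ∃ (cobj : ℕ → C) (tw : TriTower m cobj),
      cobj 0 = c ∧ ∀ i < m, IsTCover Tset (tw.gmor i) := by
  induction m generalizing c with
  | zero => exact ⟨_, TriTower.single c, rfl, fun _ hi => absurd hi (Nat.not_lt_zero _)⟩
  | succ m ih =>
    obtain ⟨t, g, hg⟩ := hcov c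
    obtain ⟨K, f, h, hT⟩ := distinguished_cocone_triangle₁ g
    obtain ⟨cobj, tw, rfl, hcovs⟩ := ih K
    refine ⟨_, tw.cons f g h hT, rfl, fun i hi => ?_⟩
    rcases i with _ | i
    · exact hg
    · exact hcovs i (by omega)

theorem TriTower.hom_shift_w_eq_zero {N : ℕ}
    (hext : ∀ y ∈ Tset, ∀ i : ℕ, 1 ≤ i → i ≤ N → ∀ x ∈ Tset, ∀ u : x ⟶ y⟦(i : ℤ)⟧, u = 0)
    {m : ℕ} {cobj : ℕ → C} (tw : TriTower m cobj) (hcov : ∀ i < m, IsTCover Tset (tw.gmor i)) :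
    ∀ j ≤ m, ∀ i : ℕ, 1 ≤ i → i ≤ j → i ≤ N →
      ∀ x ∈ Tset, ∀ u : x ⟶ (tw.w j)⟦(i : ℤ)⟧, u = 0 := by
  intro j
  induction j with
  | zero => intro _ i h1 h2; omega
  | succ j ih =>
    intro hj i h1 h2 h3 x hx u
    obtain ⟨s, rfl⟩ : ∃ s, i = s + 1 := ⟨i - 1, by omega⟩
    refine hom_to_shift_obj₁_eq_zero (tw.mem j hj) (s : ℤ) _ (by push_cast; rfl)
      (fun (v : x ⟶ (tw.w j)⟦(s : ℤ)⟧) => ?_)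
      (hext _ (hcov j hj).1 (s + 1) h1 h3 x hx) u
    rcases s with _ | s
    · -- `Hom(x, Σ⁰ w_j)` is covered by `Hom(x, Σ⁰ t_j)` since `t_j → w_j` is a `T`-approximation.
      let ε := shiftFunctorZero' C ((0 : ℕ) : ℤ) (by simp)
      obtain ⟨w, hw⟩ := (hcov j hj).2.1 x hx (v ≫ ε.hom.app _)
      show ∃ w, v = w ≫ (tw.gmor j)⟦((0 : ℕ) : ℤ)⟧'
      refine ⟨w ≫ ε.inv.app _, ?_⟩
      calc v = v ≫ ε.hom.app _ ≫ ε.inv.app _ := by rw [Iso.hom_inv_id_app, comp_id]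
        _ = w ≫ tw.gmor j ≫ ε.inv.app _ := by rw [reassoc_of% hw]
        _ = (w ≫ ε.inv.app _) ≫ (tw.gmor j)⟦((0 : ℕ) : ℤ)⟧' := by
          rw [assoc]
          exact w ≫= ε.inv.naturality (tw.gmor j)
    · have hv := ih (by omega) (s + 1) (by omega) (by omega) (by omega) x hx v
      exact ⟨0, hv.trans zero_comp.symm⟩

theorem TriTower.nonempty_iso_obj {m : ℕ} {cobj cobj' : ℕ → C} (tw : TriTower m cobj)
    (tw' : TriTower m cobj') (h0 : cobj 0 = cobj' 0)
    (hcov : ∀ i < m, IsTCover Tset (tw.gmor i)) (hcov' : ∀ i < m, IsTCover Tset (tw'.gmor i)) :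
    ∀ i, 1 ≤ i → i ≤ m + 1 → Nonempty (cobj i ≅ cobj' i) := by
  have hw : ∀ j ≤ m, Nonempty (tw.w j ≅ tw'.w j) := by
    intro j
    induction j with
    | zero => exact fun _ => ⟨eqToIso (tw.w_zero.trans (h0.trans tw'.w_zero.symm))⟩
    | succ j ih =>
      intro hj
      obtain ⟨e⟩ := ih (by omega)
      obtain ⟨α, hα⟩ := (hcov j hj).exists_iso (hcov' j hj) e
      obtain ⟨e', -⟩ := exists_iso_of_arrow_iso _ _ (rot_of_distTriang _ (tw.mem j hj))
        (rot_of_distTriang _ (tw'.mem j hj)) (Arrow.isoMk α e hα.symm)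
      exact ⟨(shiftFunctor C (1 : ℤ)).preimageIso (Triangle.π₃.mapIso e')⟩
  intro i h1 h2
  obtain ⟨j, rfl⟩ : ∃ j, i = j + 1 := ⟨i - 1, by omega⟩
  obtain ⟨e⟩ := hw j (by omega)
  rcases Nat.lt_or_ge j m with hj | hj
  · obtain ⟨α, -⟩ := (hcov j hj).exists_iso (hcov' j hj) e
    exact ⟨α⟩
  · obtain rfl : j = m := by omega
    exact ⟨eqToIso tw.w_top.symm ≪≫ e ≪≫ eqToIso tw'.w_top⟩

theorem TriTower.obj_succ_mem {m : ℕ} {cobj : ℕ → C} (tw : TriTower m cobj)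
    (hcov : ∀ i < m, IsTCover Tset (tw.gmor i)) (htop : cobj (m + 1) ∈ Tset) :
    ∀ i ≤ m, cobj (i + 1) ∈ Tset := by
  intro i hi
  rcases hi.lt_or_eq with hi | rfl
  · exact (hcov i hi).1
  · exact htop

end Triangulated

theorem stmt5 (k : Type*) [Field k] [Preadditive C] [CategoryTheory.Linear k C] [HasZeroObject C]
    [HasShift C ℤ] [∀ n : ℤ, (shiftFunctor C n).Additive] [Pretriangulated C]
    [HasFiniteBiproducts C] [IsIdempotentComplete C]
    [∀ X Y : C, FiniteDimensional k (X ⟶ Y)]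
    (n : ℕ) (hn : 2 ≤ n) (t : C) (ht : IsClusterTiltingObj n t) (c : C) :
    (∃ (cobj : ℕ → C) (tw : TriTower (n - 1) cobj),
      cobj 0 = c ∧ (∀ i < n - 1, IsTCover {x : C | inAdd t x} (tw.gmor i)) ∧
      inAdd t (cobj n)) ∧
    (∀ (cobj cobj' : ℕ → C) (tw : TriTower (n - 1) cobj) (tw' : TriTower (n - 1) cobj'),
      cobj 0 = c → cobj' 0 = c →
      (∀ i < n - 1, IsTCover {x : C | inAdd t x} (tw.gmor i)) → inAdd t (cobj n) →
      (∀ i < n - 1, IsTCover {x : C | inAdd t x} (tw'.gmor i)) → inAdd t (cobj' n) →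
      (∀ i, 1 ≤ i → i ≤ n → Nonempty (cobj i ≅ cobj' i)) ∧
      ∀ (G : Type*) [AddCommGroup G] (cls : C → G), IsAddOn {x : C | inAdd t x} cls →
        ∑ i ∈ Finset.range n, ((-1 : ℤ) ^ i) • cls (cobj (i + 1)) =
          ∑ i ∈ Finset.range n, ((-1 : ℤ) ^ i) • cls (cobj' (i + 1)))  := by
  have hsucc : n - 1 + 1 = n := by omega
  have hext : ∀ y ∈ {x : C | inAdd t x}, ∀ i : ℕ, 1 ≤ i → i ≤ n - 1 →
      ∀ x ∈ {x : C | inAdd t x}, ∀ u : x ⟶ y⟦(i : ℤ)⟧, u = 0 :=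
    fun y hy => (ht.mem_iff_ext₁ y).1 hy
  refine ⟨?_, fun cobj cobj' tw tw' h0 h0' hcov hmem hcov' hmem' => ⟨?_, fun G _ cls hcls => ?_⟩⟩
  · obtain ⟨cobj, tw, h0, hcov⟩ := exists_triTower_isTCover
      (exists_isTCover k inAdd_of_retract ht.precovering) (n - 1) c
    have htop : inAdd t (tw.w (n - 1)) := (ht.mem_iff_ext₁ _).2 fun i h1 h2 =>
      tw.hom_shift_w_eq_zero hext hcov (n - 1) le_rfl i h1 h2 h2
    exact ⟨cobj, tw, h0, hcov, hsucc ▸ tw.w_top ▸ htop⟩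
  · exact fun i h1 h2 => tw.nonempty_iso_obj tw' (h0.trans h0'.symm) hcov hcov' i h1 (by omega)
  · refine Finset.sum_congr rfl fun i hi => ?_
    have hi : i ≤ n - 1 := by have := Finset.mem_range.1 hi; omega
    rw [hcls.1 _ _ (tw.obj_succ_mem hcov (hsucc ▸ hmem) i hi)
      (tw'.obj_succ_mem hcov' (hsucc ▸ hmem') i hi)
      (tw.nonempty_iso_obj tw' (h0.trans h0'.symm) hcov hcov' (i + 1) (by omega) (by omega))]
end

section
/- With C, t, T, index_T as above: if t' ∈ T and 0 ≤ ℓ ≤ n−1, then index_T(Σ^ℓ t') = (−1)^ℓ [t'] in K_0^{sp}(T). -/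
open CategoryTheory Category Limits Pretriangulated Opposite

universe v u

/-!
If `c = Σ^ℓ t'` with `t' ∈ T` and `ℓ ≤ n - 1`, the tower of `T`-covers computing the index of `c`
is forced. Since `Hom(T, Σ^j t') = 0` for `1 ≤ j ≤ ℓ`, the first `ℓ` covers vanish, so their
triangles just desuspend: `w i ≅ Σ^{ℓ-i} t'`. At step `ℓ` the object `w ℓ ≅ t'` lies in `T`, so
its cover is an isomorphism and everything above it is zero. Hence the only nonzero term of the
alternating sum is `(-1)^ℓ [t']`.
-/

variable {C : Type u} [Category.{v} C]

lemma inAdd_of_iso [Preadditive C] [HasFiniteBiproducts C] {t x y : C} (e : x ≅ y)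
    (h : inAdd t x) : inAdd t y := by
  obtain ⟨m, i, r, hir⟩ := h
  exact ⟨m, e.inv ≫ i, r ≫ e.hom, by simp [reassoc_of% hir]⟩

lemma inAdd_of_isZero [Preadditive C] [HasFiniteBiproducts C] {t x : C} (h : IsZero x) :
    inAdd t x :=
  ⟨0, 0, 0, h.eq_of_src _ _⟩

lemma IsAddOn.eq_zero_of_isZero [Preadditive C] [HasZeroObject C] [HasShift C ℤ]
    [∀ n : ℤ, (shiftFunctor C n).Additive] [Pretriangulated C] [HasFiniteBiproducts C]
    {Tset : Set C} {G : Type*} [AddCommGroup G] {cls : C → G} (hcls : IsAddOn Tset cls)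
    (hzero : ∀ z : C, IsZero z → z ∈ Tset) {z : C} (hz : IsZero z) : cls z = 0 := by
  have hzz : IsZero (z ⊞ z) := (biprod_isZero_iff z z).2 ⟨hz, hz⟩
  have h : cls z = cls z + cls z :=
    (hcls.1 z _ (hzero z hz) (hzero _ hzz) ⟨hz.iso hzz⟩).trans
      (hcls.2 z z (hzero z hz) (hzero z hz))
  exact left_eq_add.mp h

namespace IsTCover

variable {Tset : Set C} {x c : C} {f : x ⟶ c}

lemma isIso_of_iso_mem (hf : IsTCover Tset f) {y : C} (e : c ≅ y) (hy : y ∈ Tset) :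
    IsIso f := by
  obtain ⟨s, hs⟩ := hf.2.1 y hy e.inv
  have hsection : (e.hom ≫ s) ≫ f = 𝟙 c := by rw [assoc, hs, e.hom_inv_id]
  have : IsIso (f ≫ e.hom ≫ s) := hf.2.2 _ (by rw [assoc, hsection, comp_id])
  have : Mono f := mono_of_mono f (e.hom ≫ s)
  have : IsSplitEpi f := IsSplitEpi.mk' ⟨_, hsection⟩
  exact isIso_of_mono_of_isSplitEpi f

variable [Preadditive C]

lemma isZero_of_eq_zero (hf : IsTCover Tset f) (h0 : f = 0) : IsZero x := by
  have := hf.2.2 0 (by rw [zero_comp, h0])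
  rw [IsZero.iff_id_eq_zero, ← IsIso.hom_inv_id (0 : x ⟶ x), zero_comp]

lemma isZero_of_rightOrthogonal (hf : IsTCover Tset f)
    (hc : ObjectProperty.rightOrthogonal (· ∈ Tset) c) : IsZero x :=
  hf.isZero_of_eq_zero (hc f hf.1)

end IsTCover

namespace TriTower

variable [Preadditive C] [HasZeroObject C] [HasShift C ℤ]
  [∀ n : ℤ, (shiftFunctor C n).Additive] [Pretriangulated C]
  {m : ℕ} {cobj : ℕ → C} (tw : TriTower m cobj) {Tset : Set C}
  (hcov : ∀ i < m, IsTCover Tset (tw.gmor i))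
include hcov

lemma isZero_w_succ {i : ℕ} (hi : i < m) (hw : IsZero (tw.w i)) : IsZero (tw.w (i + 1)) :=
  Triangle.isZero₁_of_isZero₂₃ _ (tw.mem i hi)
    ((hcov i hi).isZero_of_rightOrthogonal fun _ _ _ => hw.eq_of_tgt _ _) hw

lemma isZero_w_succ_of_iso_mem {i : ℕ} (hi : i < m) {x : C} (e : tw.w i ≅ x) (hx : x ∈ Tset) :
    IsZero (tw.w (i + 1)) :=
  haveI := (hcov i hi).isIso_of_iso_mem e hx
  Triangle.isZero₁_of_isIso₂ _ (tw.mem i hi) this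

lemma nonempty_iso_w_succ_of_rightOrthogonal {i : ℕ} (hi : i < m) {y : C}
    (e : tw.w i ≅ y⟦(1 : ℤ)⟧) (hw : ObjectProperty.rightOrthogonal (· ∈ Tset) (tw.w i)) :
    Nonempty (tw.w (i + 1) ≅ y) := by
  have hz := (hcov i hi).isZero_of_rightOrthogonal hw
  have : IsIso (tw.hmor i) := (Triangle.isZero₂_iff_isIso₃ _ (tw.mem i hi)).1 hz
  exact ⟨(shiftFunctor C (1 : ℤ)).preimageIso ((asIso (tw.hmor i)).symm ≪≫ e)⟩

variable {x : C} {ℓ : ℕ} (e₀ : tw.w 0 ≅ x⟦(ℓ : ℤ)⟧) (hx : x ∈ Tset)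
  (horth : ∀ j : ℕ, 1 ≤ j → j ≤ ℓ → ObjectProperty.rightOrthogonal (· ∈ Tset) (x⟦(j : ℤ)⟧))

include e₀ horth in
lemma nonempty_iso_w_shift : ∀ i j : ℕ, i + j = ℓ → i ≤ m → Nonempty (tw.w i ≅ x⟦(j : ℤ)⟧)
  | 0, j, hj, _ => ⟨e₀ ≪≫ eqToIso (by rw [← hj, zero_add])⟩
  | i + 1, j, hij, him => by
    obtain ⟨e⟩ := nonempty_iso_w_shift i (j + 1) (by omega) (by omega)
    exact tw.nonempty_iso_w_succ_of_rightOrthogonal hcov (by omega)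
      (e ≪≫ (shiftFunctorAdd' C (j : ℤ) 1 ((j + 1 : ℕ) : ℤ) (by push_cast; rfl)).app x)
      (ObjectProperty.prop_of_iso _ e.symm (horth (j + 1) (by omega) (by omega)))

include e₀ horth in
lemma nonempty_iso_w (hℓ : ℓ ≤ m) : Nonempty (tw.w ℓ ≅ x) := by
  obtain ⟨e⟩ := tw.nonempty_iso_w_shift hcov e₀ horth ℓ 0 rfl hℓ
  exact ⟨e ≪≫ (shiftFunctorZero' C ((0 : ℕ) : ℤ) Nat.cast_zero).app x⟩

include e₀ hx horth in
lemma isZero_w_of_lt {i : ℕ} (hℓi : ℓ < i) (him : i ≤ m) : IsZero (tw.w i) := by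
  induction i, hℓi using Nat.le_induction with
  | base =>
    obtain ⟨e⟩ := tw.nonempty_iso_w hcov e₀ horth (by omega)
    exact tw.isZero_w_succ_of_iso_mem hcov (by omega) e hx
  | succ i _ ih => exact tw.isZero_w_succ hcov (by omega) (ih (by omega))

include e₀ hx horth in
lemma rightOrthogonal_w {i : ℕ} (him : i ≤ m) (hiℓ : i ≠ ℓ) :
    ObjectProperty.rightOrthogonal (· ∈ Tset) (tw.w i) := by
  rcases Nat.lt_or_gt_of_ne hiℓ with hlt | hgt
  · obtain ⟨e⟩ := tw.nonempty_iso_w_shift hcov e₀ horth i (ℓ - i) (by omega) him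
    exact ObjectProperty.prop_of_iso _ e.symm (horth (ℓ - i) (by omega) (Nat.sub_le ℓ i))
  · exact fun _ _ _ => (tw.isZero_w_of_lt hcov e₀ hx horth hgt him).eq_of_tgt _ _

include e₀ hx horth in
lemma isZero_cobj_succ_of_ne (hℓ : ℓ ≤ m) {i : ℕ} (him : i ≤ m) (hiℓ : i ≠ ℓ) :
    IsZero (cobj (i + 1)) := by
  rcases Nat.lt_or_ge i m with hlt | hge
  · exact (hcov i hlt).isZero_of_rightOrthogonal (tw.rightOrthogonal_w hcov e₀ hx horth him hiℓ)
  · obtain rfl : i = m := by omega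
    exact tw.w_top ▸ tw.isZero_w_of_lt hcov e₀ hx horth (by omega) le_rfl

include e₀ hx horth in
lemma nonempty_iso_cobj_succ (hℓ : ℓ ≤ m) : Nonempty (cobj (ℓ + 1) ≅ x) := by
  obtain ⟨e⟩ := tw.nonempty_iso_w hcov e₀ horth hℓ
  rcases Nat.lt_or_ge ℓ m with hlt | hge
  · have := (hcov ℓ hlt).isIso_of_iso_mem e hx
    exact ⟨asIso (tw.gmor ℓ) ≪≫ e⟩
  · obtain rfl : ℓ = m := by omega
    exact ⟨eqToIso tw.w_top.symm ≪≫ e⟩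

end TriTower

theorem stmt6 (k : Type*) [Field k] [Preadditive C] [CategoryTheory.Linear k C] [HasZeroObject C]
    [HasShift C ℤ] [∀ n : ℤ, (shiftFunctor C n).Additive] [Pretriangulated C]
    [HasFiniteBiproducts C] [IsIdempotentComplete C]
    [∀ X Y : C, FiniteDimensional k (X ⟶ Y)]
    (n : ℕ) (hn : 2 ≤ n) (t : C) (ht : IsClusterTiltingObj n t)
    {G : Type*} [AddCommGroup G] (cls ind : C → G)
    (hcls : IsAddOn {x : C | inAdd t x} cls)
    (hind : IsIndex n {x : C | inAdd t x} cls ind)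
    (t' : C) (ht' : inAdd t t') (ℓ : ℕ) (hℓ : ℓ ≤ n - 1) :
    ind (t'⟦(ℓ : ℤ)⟧) = ((-1 : ℤ) ^ ℓ) • cls t' := by
  obtain ⟨cobj, tw, hc₀, hcov, -, hsum⟩ := hind (t'⟦(ℓ : ℤ)⟧)
  have e₀ : tw.w 0 ≅ t'⟦(ℓ : ℤ)⟧ := eqToIso (tw.w_zero.trans hc₀)
  have horth (j : ℕ) (hj : 1 ≤ j) (hjℓ : j ≤ ℓ) :
      ObjectProperty.rightOrthogonal (· ∈ {x : C | inAdd t x}) (t'⟦(j : ℤ)⟧) :=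
    fun _ f hy => (ht.mem_iff_ext₁ t').1 ht' j hj (hjℓ.trans hℓ) _ hy f
  rw [hsum, Finset.sum_eq_single_of_mem ℓ (Finset.mem_range.2 (by omega))]
  · obtain ⟨e⟩ := tw.nonempty_iso_cobj_succ hcov e₀ ht' horth hℓ
    rw [hcls.1 _ _ (inAdd_of_iso e.symm ht') ht' ⟨e⟩]
  · intro i hi hiℓ
    have hz := tw.isZero_cobj_succ_of_ne hcov e₀ ht' horth hℓ
      (Nat.le_sub_one_of_lt (Finset.mem_range.1 hi)) hiℓ
    rw [hcls.eq_zero_of_isZero (fun _ => inAdd_of_isZero) hz, smul_zero]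
end
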